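/- arXiv:2304.02441 — 2 statements merged into one kernel-verified Lean document; each statement's English description precedes it below -/
import Mathlib

section
/- Suppose the spectral (operator 2-)norm of W − I is at most 2. Let x, x̃ ∈ ℝ^{n₁}, let Λ = (λ_1,…,λ_m) and Λ̃ = (λ̃_1,…,λ̃_m) be tuples in (ℝ^{n₂})^m, let Y = (y_1,…,y_m) satisfy the first-order maximality condition for Φ(X, Λ, ·) with X = (x, x, …, x) (all blocks equal to x), and let Ỹ = (ỹ_1,…,ỹ_m) satisfy the first-order maximality condition for Φ(X̃, Λ̃, ·) with X̃ = (x̃, x̃, …, x̃). Then ‖(1/m) Σ_{i=1}^m ∇_x f_i(x, y_i) − (1/m) Σ_{i=1}^m ∇_x f_i(x̃, ỹ_i)‖² + (L²/(4m)) Σ_{i=1}^m ‖Σ_{j=1}^m (w_{ij} − δ_{ij})(y_j − ỹ_j)‖² ≤ L²(4κ² + 1) · (‖x − x̃‖² + Σ_{i=1}^m ‖λ_i − λ̃_i‖²), where κ = L/μ. (That is, the function P(x, Λ) = max_Y Φ((x,…,x), Λ, Y) is L_P-smooth with L_P = L√(4κ² + 1), the left-hand side being the squared norm of the difference of its gradients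 given by Danskin's theorem.) -/
open scoped BigOperators RealInnerProductSpace

/-! Subtract the first-order conditions at `(x, Λ)` and `(x', Λ')` node by node and pair with
`yᵢ - yᵢ'`: monotonicity of `∂h` and `μ`-strong concavity give
`μ ‖yᵢ - yᵢ'‖ ≤ L ‖x - x'‖ + (L √m / 2) ‖((W - I)ᵀ (Λ - Λ'))ᵢ‖`, and summing squares with
`‖W - I‖ ≤ 2` yields `μ² ‖Y - Y'‖² ≤ 2 m L² (‖x - x'‖² + ‖Λ - Λ'‖²)`. By Jensen the first term of
the left-hand side is at most `L² ‖x - x'‖² + L² ‖Y - Y'‖² / m`, and by `‖W - I‖ ≤ 2` the second is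
at most `L² ‖Y - Y'‖² / m`. -/

open Finset

section InnerProductSpace

variable {E : Type*} [NormedAddCommGroup E] [InnerProductSpace ℝ E]

lemma inner_sub_sub_nonneg_of_subgradient {h : E → ℝ} {y y' ζ ζ' : E}
    (hζ : ∀ z, h y + ⟪ζ, z - y⟫ ≤ h z) (hζ' : ∀ z, h y' + ⟪ζ', z - y'⟫ ≤ h z) :
    0 ≤ ⟪y - y', ζ - ζ'⟫ := by
  have hsum : ⟪y - y', ζ - ζ'⟫ = -(⟪ζ, y' - y⟫ + ⟪ζ', y - y'⟫) := by
    simp only [inner_sub_left, inner_sub_right, real_inner_comm]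
    ring
  linarith [hζ y', hζ' y]

/-- Perturbation bound for the inclusion `F y ∈ ∂h(y)` with `-F` strongly monotone; `hζ` is the
monotonicity of `∂h`. -/
lemma mul_norm_sub_le_of_strongMonotone {μ : ℝ} {F F' : E → E} {y y' ζ ζ' : E}
    (hF : ⟪y - y', F y - F y'⟫ ≤ -μ * ‖y - y'‖ ^ 2) (hζ : 0 ≤ ⟪y - y', ζ - ζ'⟫) :
    μ * ‖y - y'‖ ≤ ‖F y' - F' y'‖ + ‖(F y - ζ) - (F' y' - ζ')‖ := by
  set e := F y' - F' y'
  set r := (F y - ζ) - (F' y' - ζ')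
  have hsplit : F y - F y' = (ζ - ζ') + r - e := by simp only [e, r]; abel
  have hquad : μ * ‖y - y'‖ * ‖y - y'‖ ≤ (‖e‖ + ‖r‖) * ‖y - y'‖ := by
    rw [hsplit, inner_sub_right, inner_add_right] at hF
    nlinarith [real_inner_le_norm (y - y') e, neg_le_of_abs_le (abs_real_inner_le_norm (y - y') r)]
  rcases (norm_nonneg (y - y')).eq_or_lt with hzero | hpos
  · rw [← hzero, mul_zero]
    positivity
  · exact le_of_mul_le_mul_right hquad hpos

lemma norm_inv_card_smul_sum_sq_le {ι : Type*} [Fintype ι] (v : ι → E) :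
    ‖(Fintype.card ι : ℝ)⁻¹ • ∑ i, v i‖ ^ 2 ≤ (Fintype.card ι : ℝ)⁻¹ * ∑ i, ‖v i‖ ^ 2 := by
  have hsum : ‖∑ i, v i‖ ^ 2 ≤ Fintype.card ι * ∑ i, ‖v i‖ ^ 2 :=
    (pow_le_pow_left₀ (norm_nonneg _) (norm_sum_le _ _) 2).trans (sq_sum_le_card_mul_sum_sq ..)
  rw [norm_smul, mul_pow, Real.norm_eq_abs, sq_abs]
  calc ((Fintype.card ι : ℝ)⁻¹) ^ 2 * ‖∑ i, v i‖ ^ 2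
      ≤ ((Fintype.card ι : ℝ)⁻¹) ^ 2 * (Fintype.card ι * ∑ i, ‖v i‖ ^ 2) := by gcongr
    _ = (Fintype.card ι : ℝ)⁻¹ * ∑ i, ‖v i‖ ^ 2 := by
      rcases eq_or_ne (Fintype.card ι : ℝ) 0 with h0 | h0
      · simp [h0]
      · field_simp

end InnerProductSpace

lemma sum_norm_sum_smul_sq_le {ι κ : Type*} [Fintype ι] [Fintype κ] {K : ℝ} (c : ι → ι → ℝ)
    (hc : ∀ v : ι → ℝ, ∑ i, (∑ j, c i j * v j) ^ 2 ≤ K * ∑ i, v i ^ 2)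
    (V : ι → EuclideanSpace ℝ κ) :
    ∑ i, ‖∑ j, c i j • V j‖ ^ 2 ≤ K * ∑ i, ‖V i‖ ^ 2 := by
  have hcoord : ∀ i k, (∑ j, c i j • V j) k = ∑ j, c i j * V j k := by
    intro i k
    simp [WithLp.ofLp_sum, Finset.sum_apply]
  simp only [EuclideanSpace.real_norm_sq_eq, hcoord]
  rw [sum_comm, sum_comm (f := fun i k => V i k ^ 2), mul_sum]
  exact sum_le_sum fun k _ => hc fun j => V j k

lemma sq_mul_sum_norm_sub_sq_le {m : ℕ} (hm : 0 < m) {X κ : Type*} [SeminormedAddCommGroup X]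
    [Fintype κ] {L μ : ℝ} (hμ : 0 ≤ μ) (Gy : Fin m → X → EuclideanSpace ℝ κ → EuclideanSpace ℝ κ)
    (hGy : ∀ i x x' y, ‖Gy i x y - Gy i x' y‖ ^ 2 ≤ L ^ 2 * ‖x - x'‖ ^ 2)
    (hconc : ∀ i x y y', ⟪y - y', Gy i x y - Gy i x y'⟫ ≤ -μ * ‖y - y'‖ ^ 2)
    (c : Fin m → Fin m → ℝ)
    (hc : ∀ v : Fin m → ℝ, ∑ i, (∑ j, c j i * v j) ^ 2 ≤ 4 * ∑ i, v i ^ 2)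
    {h : EuclideanSpace ℝ κ → ℝ} {x x' : X} {Λ Λ' Y Y' ζ ζ' : Fin m → EuclideanSpace ℝ κ}
    (hζ : ∀ i z, h (Y i) + ⟪ζ i, z - Y i⟫ ≤ h z) (hζ' : ∀ i z, h (Y' i) + ⟪ζ' i, z - Y' i⟫ ≤ h z)
    (hY : ∀ i, (1 / (m : ℝ)) • (Gy i x (Y i) - ζ i) = (L / (2 * √m)) • ∑ j, c j i • Λ j)
    (hY' : ∀ i, (1 / (m : ℝ)) • (Gy i x' (Y' i) - ζ' i) = (L / (2 * √m)) • ∑ j, c j i • Λ' j) :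
    μ ^ 2 * ∑ i, ‖Y i - Y' i‖ ^ 2 ≤ 2 * m * L ^ 2 * (‖x - x'‖ ^ 2 + ∑ i, ‖Λ i - Λ' i‖ ^ 2) := by
  have hm0 : (m : ℝ) ≠ 0 := by positivity
  set u : Fin m → EuclideanSpace ℝ κ := fun i => ∑ j, c j i • (Λ j - Λ' j)
  have hres : ∀ i, (Gy i x (Y i) - ζ i) - (Gy i x' (Y' i) - ζ' i) = (m * (L / (2 * √m))) • u i := by
    intro i
    rw [← smul_inv_smul₀ hm0 (Gy i x (Y i) - ζ i), ← smul_inv_smul₀ hm0 (Gy i x' (Y' i) - ζ' i),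
      ← one_div, hY i, hY' i]
    simp only [u, smul_sub, sum_sub_distrib, smul_smul]
  have hscale : ‖(m : ℝ) * (L / (2 * √m))‖ ^ 2 = m * L ^ 2 / 4 := by
    rw [Real.norm_eq_abs, sq_abs, mul_pow, div_pow, mul_pow, Real.sq_sqrt (Nat.cast_nonneg m)]
    field_simp
    ring
  have hnode : ∀ i, μ ^ 2 * ‖Y i - Y' i‖ ^ 2
      ≤ 2 * (L ^ 2 * ‖x - x'‖ ^ 2 + m * L ^ 2 / 4 * ‖u i‖ ^ 2) := by
    intro i
    have hlin := mul_norm_sub_le_of_strongMonotone (F' := Gy i x') (hconc i x (Y i) (Y' i))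
      (inner_sub_sub_nonneg_of_subgradient (hζ i) (hζ' i))
    rw [hres i, norm_smul] at hlin
    calc μ ^ 2 * ‖Y i - Y' i‖ ^ 2 = (μ * ‖Y i - Y' i‖) ^ 2 := by ring
      _ ≤ (‖Gy i x (Y' i) - Gy i x' (Y' i)‖ + ‖(m : ℝ) * (L / (2 * √m))‖ * ‖u i‖) ^ 2 :=
        pow_le_pow_left₀ (by positivity) hlin 2
      _ ≤ 2 * (‖Gy i x (Y' i) - Gy i x' (Y' i)‖ ^ 2 + (‖(m : ℝ) * (L / (2 * √m))‖ * ‖u i‖) ^ 2) :=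
        add_sq_le
      _ ≤ 2 * (L ^ 2 * ‖x - x'‖ ^ 2 + m * L ^ 2 / 4 * ‖u i‖ ^ 2) := by
        rw [mul_pow, hscale]
        gcongr
        exact hGy i x x' (Y' i)
  have hu : ∑ i, ‖u i‖ ^ 2 ≤ 4 * ∑ i, ‖Λ i - Λ' i‖ ^ 2 :=
    sum_norm_sum_smul_sq_le (fun i j => c j i) hc fun j => Λ j - Λ' j
  calc μ ^ 2 * ∑ i, ‖Y i - Y' i‖ ^ 2 = ∑ i, μ ^ 2 * ‖Y i - Y' i‖ ^ 2 := mul_sum ..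
    _ ≤ ∑ i, 2 * (L ^ 2 * ‖x - x'‖ ^ 2 + m * L ^ 2 / 4 * ‖u i‖ ^ 2) := sum_le_sum fun i _ => hnode i
    _ = 2 * (m * L ^ 2 * ‖x - x'‖ ^ 2 + m * L ^ 2 / 4 * ∑ i, ‖u i‖ ^ 2) := by
      simp only [← mul_sum, sum_add_distrib, sum_const, card_univ, Fintype.card_fin, nsmul_eq_mul]
      ring
    _ ≤ 2 * m * L ^ 2 * (‖x - x'‖ ^ 2 + ∑ i, ‖Λ i - Λ' i‖ ^ 2) := by nlinarith [hu]

theorem dgdmax_P_smooth_general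
    {m n₁ n₂ : ℕ} (hm : 0 < m)
    (L μ : ℝ) (hμ : 0 < μ)
    (Gx : Fin m → EuclideanSpace ℝ (Fin n₁) → EuclideanSpace ℝ (Fin n₂) →
      EuclideanSpace ℝ (Fin n₁))
    (Gy : Fin m → EuclideanSpace ℝ (Fin n₁) → EuclideanSpace ℝ (Fin n₂) →
      EuclideanSpace ℝ (Fin n₂))
    (hLip : ∀ i x y x' y',
      ‖Gx i x y - Gx i x' y'‖ ^ 2 + ‖Gy i x y - Gy i x' y'‖ ^ 2
        ≤ L ^ 2 * (‖x - x'‖ ^ 2 + ‖y - y'‖ ^ 2))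
    (hconc : ∀ i x y y', ⟪y - y', Gy i x y - Gy i x y'⟫ ≤ -μ * ‖y - y'‖ ^ 2)
    (h : EuclideanSpace ℝ (Fin n₂) → ℝ)
    (w : Fin m → Fin m → ℝ)
    -- `‖W − I‖₂ ≤ 2` (squared form), for `W − I` and its transpose
    (hWI : ∀ v : Fin m → ℝ,
      ∑ i, (∑ j, (w i j - if i = j then 1 else 0) * v j) ^ 2 ≤ 4 * ∑ i, (v i) ^ 2)
    (hWIt : ∀ v : Fin m → ℝ,
      ∑ i, (∑ j, (w j i - if i = j then 1 else 0) * v j) ^ 2 ≤ 4 * ∑ i, (v i) ^ 2)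
    (x x' : EuclideanSpace ℝ (Fin n₁))
    (Λ Λ' : Fin m → EuclideanSpace ℝ (Fin n₂))
    (Y Y' : Fin m → EuclideanSpace ℝ (Fin n₂))
    -- `Y` satisfies the first-order maximality condition for `Φ((x,…,x), Λ, ·)`
    (hY : ∃ ζ : Fin m → EuclideanSpace ℝ (Fin n₂),
      (∀ i, ∀ z, h (Y i) + ⟪ζ i, z - Y i⟫ ≤ h z) ∧
      (∀ i, (1 / (m : ℝ)) • (Gy i x (Y i) - ζ i)
          = (L / (2 * Real.sqrt (m : ℝ))) •
              ∑ j, (w j i - if i = j then 1 else 0) • Λ j))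
    -- `Ỹ` satisfies the first-order maximality condition for `Φ((x̃,…,x̃), Λ̃, ·)`
    (hY' : ∃ ζ : Fin m → EuclideanSpace ℝ (Fin n₂),
      (∀ i, ∀ z, h (Y' i) + ⟪ζ i, z - Y' i⟫ ≤ h z) ∧
      (∀ i, (1 / (m : ℝ)) • (Gy i x' (Y' i) - ζ i)
          = (L / (2 * Real.sqrt (m : ℝ))) •
              ∑ j, (w j i - if i = j then 1 else 0) • Λ' j)) :
    ‖(1 / (m : ℝ)) • ∑ i, Gx i x (Y i) - (1 / (m : ℝ)) • ∑ i, Gx i x' (Y' i)‖ ^ 2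
      + (L ^ 2 / (4 * (m : ℝ))) *
          ∑ i, ‖∑ j, (w i j - if i = j then 1 else 0) • (Y j - Y' j)‖ ^ 2
      ≤ L ^ 2 * (4 * (L / μ) ^ 2 + 1) * (‖x - x'‖ ^ 2 + ∑ i, ‖Λ i - Λ' i‖ ^ 2) := by
  obtain ⟨ζ, hζ, hYζ⟩ := hY
  obtain ⟨ζ', hζ', hYζ'⟩ := hY'
  have hGy_lip : ∀ i a a' y, ‖Gy i a y - Gy i a' y‖ ^ 2 ≤ L ^ 2 * ‖a - a'‖ ^ 2 := fun i a a' y => by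
    simpa using (le_add_of_nonneg_left (sq_nonneg _)).trans (hLip i a y a' y)
  have hY_lip := sq_mul_sum_norm_sub_sq_le hm hμ.le Gy hGy_lip hconc _ hWIt hζ hζ' hYζ hYζ'
  set A := ∑ i, ‖Y i - Y' i‖ ^ 2
  set D := ‖x - x'‖ ^ 2 + ∑ i, ‖Λ i - Λ' i‖ ^ 2
  have hGx_mean : ‖(1 / (m : ℝ)) • ∑ i, Gx i x (Y i) - (1 / (m : ℝ)) • ∑ i, Gx i x' (Y' i)‖ ^ 2
      ≤ L ^ 2 * ‖x - x'‖ ^ 2 + L ^ 2 * (A / m) := by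
    rw [← smul_sub, ← sum_sub_distrib, one_div]
    calc _ ≤ (m : ℝ)⁻¹ * ∑ i, ‖Gx i x (Y i) - Gx i x' (Y' i)‖ ^ 2 := by
          simpa using norm_inv_card_smul_sum_sq_le fun i => Gx i x (Y i) - Gx i x' (Y' i)
      _ ≤ (m : ℝ)⁻¹ * ∑ i, L ^ 2 * (‖x - x'‖ ^ 2 + ‖Y i - Y' i‖ ^ 2) := by
          gcongr with i
          linarith [hLip i x (Y i) x' (Y' i), sq_nonneg ‖Gy i x (Y i) - Gy i x' (Y' i)‖]
      _ = L ^ 2 * ‖x - x'‖ ^ 2 + L ^ 2 * (A / m) := by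
          simp only [← mul_sum, sum_add_distrib, sum_const, card_univ, Fintype.card_fin,
            nsmul_eq_mul, A]
          field_simp
  have hcons : (L ^ 2 / (4 * (m : ℝ))) *
      ∑ i, ‖∑ j, (w i j - if i = j then 1 else 0) • (Y j - Y' j)‖ ^ 2 ≤ L ^ 2 * (A / m) := by
    calc _ ≤ (L ^ 2 / (4 * (m : ℝ))) * (4 * A) := by gcongr; exact sum_norm_sum_smul_sq_le _ hWI _
      _ = L ^ 2 * (A / m) := by ring
  have hA : A / m ≤ 2 * (L / μ) ^ 2 * D := by
    calc A / m = μ ^ 2 * A / (μ ^ 2 * m) := by field_simp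
      _ ≤ 2 * m * L ^ 2 * D / (μ ^ 2 * m) := by gcongr
      _ = 2 * (L / μ) ^ 2 * D := by field_simp
  have hxD : ‖x - x'‖ ^ 2 ≤ D := le_add_of_nonneg_right (by positivity)
  nlinarith [mul_le_mul_of_nonneg_left hA (sq_nonneg L), mul_le_mul_of_nonneg_left hxD (sq_nonneg L)]

/-- Smoothness of `P(x, Λ) = max_Y Φ((x,…,x), Λ, Y)`: the squared norm of
the difference of the Danskin gradients of `P` at `(x, Λ)` and `(x̃, Λ̃)` is bounded by
`L_P² (‖x − x̃‖² + ‖Λ − Λ̃‖_F²)` with `L_P = L√(4κ² + 1)`, `κ = L/μ`. -/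
theorem dgdmax_P_smooth
    {m n₁ n₂ : ℕ} (hm : 0 < m) (hn₁ : 0 < n₁) (hn₂ : 0 < n₂)
    (L μ : ℝ) (hμ : 0 < μ) (hLμ : μ ≤ L)
    (f : Fin m → EuclideanSpace ℝ (Fin n₁) → EuclideanSpace ℝ (Fin n₂) → ℝ)
    (Gx : Fin m → EuclideanSpace ℝ (Fin n₁) → EuclideanSpace ℝ (Fin n₂) →
      EuclideanSpace ℝ (Fin n₁))
    (Gy : Fin m → EuclideanSpace ℝ (Fin n₁) → EuclideanSpace ℝ (Fin n₂) →
      EuclideanSpace ℝ (Fin n₂))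
    (hGx : ∀ i x y, HasGradientAt (fun x' => f i x' y) (Gx i x y) x)
    (hGy : ∀ i x y, HasGradientAt (fun y' => f i x y') (Gy i x y) y)
    (hLip : ∀ i x y x' y',
      ‖Gx i x y - Gx i x' y'‖ ^ 2 + ‖Gy i x y - Gy i x' y'‖ ^ 2
        ≤ L ^ 2 * (‖x - x'‖ ^ 2 + ‖y - y'‖ ^ 2))
    (hconc : ∀ i x y y', ⟪y - y', Gy i x y - Gy i x y'⟫ ≤ -μ * ‖y - y'‖ ^ 2)
    (h : EuclideanSpace ℝ (Fin n₂) → ℝ) (hconv : ConvexOn ℝ Set.univ h)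
    (w : Fin m → Fin m → ℝ)
    -- `‖W − I‖₂ ≤ 2` (squared form), for `W − I` and its transpose
    (hWI : ∀ v : Fin m → ℝ,
      ∑ i, (∑ j, (w i j - if i = j then 1 else 0) * v j) ^ 2 ≤ 4 * ∑ i, (v i) ^ 2)
    (hWIt : ∀ v : Fin m → ℝ,
      ∑ i, (∑ j, (w j i - if i = j then 1 else 0) * v j) ^ 2 ≤ 4 * ∑ i, (v i) ^ 2)
    (x x' : EuclideanSpace ℝ (Fin n₁))
    (Λ Λ' : Fin m → EuclideanSpace ℝ (Fin n₂))
    (Y Y' : Fin m → EuclideanSpace ℝ (Fin n₂))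
    -- `Y` satisfies the first-order maximality condition for `Φ((x,…,x), Λ, ·)`
    (hY : ∃ ζ : Fin m → EuclideanSpace ℝ (Fin n₂),
      (∀ i, ∀ z, h (Y i) + ⟪ζ i, z - Y i⟫ ≤ h z) ∧
      (∀ i, (1 / (m : ℝ)) • (Gy i x (Y i) - ζ i)
          = (L / (2 * Real.sqrt (m : ℝ))) •
              ∑ j, (w j i - if i = j then 1 else 0) • Λ j))
    -- `Ỹ` satisfies the first-order maximality condition for `Φ((x̃,…,x̃), Λ̃, ·)`
    (hY' : ∃ ζ : Fin m → EuclideanSpace ℝ (Fin n₂),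
      (∀ i, ∀ z, h (Y' i) + ⟪ζ i, z - Y' i⟫ ≤ h z) ∧
      (∀ i, (1 / (m : ℝ)) • (Gy i x' (Y' i) - ζ i)
          = (L / (2 * Real.sqrt (m : ℝ))) •
              ∑ j, (w j i - if i = j then 1 else 0) • Λ' j)) :
    ‖(1 / (m : ℝ)) • ∑ i, Gx i x (Y i) - (1 / (m : ℝ)) • ∑ i, Gx i x' (Y' i)‖ ^ 2
      + (L ^ 2 / (4 * (m : ℝ))) *
          ∑ i, ‖∑ j, (w i j - if i = j then 1 else 0) • (Y j - Y' j)‖ ^ 2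
      ≤ L ^ 2 * (4 * (L / μ) ^ 2 + 1) * (‖x - x'‖ ^ 2 + ∑ i, ‖Λ i - Λ' i‖ ^ 2) :=
  dgdmax_P_smooth_general hm L μ hμ Gx Gy hLip hconc h w hWI hWIt x x' Λ Λ' Y Y' hY hY'
end

section
/- Assume the setting, with W𝟏 = 𝟏 (each row of W sums to 1), and additionally assume h is convex and differentiable with L_h-Lipschitz gradient (‖∇h(y) − ∇h(ỹ)‖ ≤ L_h‖y − ỹ‖ for all y, ỹ), L_h ≥ 0. Fix x̄ ∈ ℝ^{n₁} and Λ̄ = (λ̄_1,…,λ̄_m) ∈ (ℝ^{n₂})^m. Suppose Ȳ = (ȳ_1,…,ȳ_m) satisfies: (a) Φ((x̄,…,x̄), Λ̄, Ȳ) ≥ Φ((x̄,…,x̄), Λ̄, Y) for every Y; and (b) (1/m)(∇_y f_i(x̄, ȳ_i) − ∇h(ȳ_i)) = (L/(2√m)) Σ_{j=1}^m (w_{ji} − δ_{ij}) λ̄_j for every i. Let ŷ be a maximizer of y ↦ (1/m) Σ_{i=1}^m f_i(x̄, y) − h(y) over ℝ^{n₂}, and ȳ_avg = (1/m) Σ_{i=1}^m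 ȳ_i. Then μ ‖ŷ − ȳ_avg‖² ≤ ((L + L_h)/m) Σ_{i=1}^m ‖ȳ_i − ȳ_avg‖². -/
/-!
With `g y = (1/m) Σᵢ fᵢ(x̄, y) - h y`, the point `ŷ` is a critical point of the `μ`-strongly
concave `g`, so `g ȳ_avg + μ/2 ‖ȳ_avg - ŷ‖² ≤ g ŷ`. On the other hand `g ŷ` is the value of `Φ`
at the consensus point `(ŷ, …, ŷ)`, which is at most `Φ` at `Ȳ`. Since the rows of `W - I` sum to
zero, the stationarity condition rewrites `Φ` at `Ȳ` as
`(1/m) Σᵢ (fᵢ(x̄, ȳᵢ) - h ȳᵢ - ⟪∇(fᵢ - h)(ȳᵢ), ȳᵢ - ȳ_avg⟫)`, and the descent lemma for the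
`(L + L_h)`-smooth `fᵢ(x̄, ·) - h` bounds this by `g ȳ_avg + (L + L_h)/(2m) Σᵢ ‖ȳᵢ - ȳ_avg‖²`.
-/

open scoped RealInnerProductSpace
open Set

/-- The function `Φ(X, Λ, Y)` of the reformulated decentralized minimax problem. -/
noncomputable def Phi {m n₁ n₂ : ℕ} (L : ℝ)
    (f : Fin m → EuclideanSpace ℝ (Fin n₁) → EuclideanSpace ℝ (Fin n₂) → ℝ)
    (h : EuclideanSpace ℝ (Fin n₂) → ℝ) (w : Fin m → Fin m → ℝ)
    (X : Fin m → EuclideanSpace ℝ (Fin n₁))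
    (Λ Y : Fin m → EuclideanSpace ℝ (Fin n₂)) : ℝ :=
  (1 / (m : ℝ)) * ∑ i, (f i (X i) (Y i) - h (Y i))
    - (L / (2 * Real.sqrt (m : ℝ))) *
        ∑ i, ⟪Λ i, ∑ j, (w i j - if i = j then 1 else 0) • Y j⟫

section Gradient

variable {E : Type*} [NormedAddCommGroup E] [InnerProductSpace ℝ E] [CompleteSpace E]
  {φ ψ : E → ℝ} {G : E → E}

theorem HasGradientAt.sub {x g g' : E} (hφ : HasGradientAt φ g x) (hψ : HasGradientAt ψ g' x) :
    HasGradientAt (fun y => φ y - ψ y) (g - g') x := by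
  rw [hasGradientAt_iff_hasFDerivAt, map_sub]
  exact hφ.hasFDerivAt.sub hψ.hasFDerivAt

theorem HasGradientAt.hasDerivAt_comp_add_smul {p v g : E} {t : ℝ}
    (hφ : HasGradientAt φ g (p + t • v)) :
    HasDerivAt (fun s : ℝ => φ (p + s • v)) ⟪g, v⟫ t := by
  have hline : HasDerivAt (fun s : ℝ => p + s • v) v t := by
    simpa using ((hasDerivAt_id t).smul_const v).const_add p
  simpa [Function.comp_def] using hφ.hasFDerivAt.comp_hasDerivAt t hline

theorem le_add_inner_add_sq_of_inner_sub_le (hφ : ∀ y, HasGradientAt φ (G y) y) {K : ℝ}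
    (hG : ∀ y y', ⟪y - y', G y - G y'⟫ ≤ K * ‖y - y'‖ ^ 2) (p q : E) :
    φ q ≤ φ p + ⟪G p, q - p⟫ + K / 2 * ‖q - p‖ ^ 2 := by
  set v := q - p
  have hχ : ∀ t : ℝ, HasDerivAt (fun t => φ (p + t • v) - t * ⟪G p, v⟫ - K / 2 * t ^ 2 * ‖v‖ ^ 2)
      (⟪G (p + t • v), v⟫ - ⟪G p, v⟫ - K * t * ‖v‖ ^ 2) t := fun t => by
    have hsq := ((hasDerivAt_pow 2 t).const_mul (K / 2)).mul_const (‖v‖ ^ 2)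
    have hlin := (hasDerivAt_id t).mul_const ⟪G p, v⟫
    refine (((hφ (p + t • v)).hasDerivAt_comp_add_smul.sub hlin).sub hsq).congr_deriv ?_
    simp only [one_mul, Nat.cast_ofNat]
    ring
  obtain ⟨c, ⟨hc, -⟩, hslope⟩ := exists_hasDerivAt_eq_slope _ _ zero_lt_one
    (fun t _ => (hχ t).continuousAt.continuousWithinAt) fun t _ => hχ t
  have hcv : c * ⟪G (p + c • v) - G p, v⟫ ≤ c * (K * c * ‖v‖ ^ 2) := by
    have := hG (p + c • v) p
    rw [add_sub_cancel_left, real_inner_smul_left, real_inner_comm, norm_smul,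
      Real.norm_of_nonneg hc.le] at this
    linarith
  have hp : p + v = q := add_sub_cancel p q
  rw [inner_sub_left] at hcv
  simp only [one_smul, zero_smul, add_zero, hp] at hslope
  nlinarith

theorem le_add_inner_add_sq_of_lipschitz (hφ : ∀ y, HasGradientAt φ (G y) y) {K : ℝ}
    (hG : ∀ y y', ‖G y - G y'‖ ≤ K * ‖y - y'‖) (p q : E) :
    φ q ≤ φ p + ⟪G p, q - p⟫ + K / 2 * ‖q - p‖ ^ 2 :=
  le_add_inner_add_sq_of_inner_sub_le hφ (fun y y' => by
    calc ⟪y - y', G y - G y'⟫ ≤ ‖y - y'‖ * ‖G y - G y'‖ := real_inner_le_norm _ _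
      _ ≤ ‖y - y'‖ * (K * ‖y - y'‖) := by gcongr; exact hG y y'
      _ = K * ‖y - y'‖ ^ 2 := by ring) p q

theorem sub_sub_inner_le_add_sq_of_lipschitz {Gψ : E → E} (hφ : ∀ y, HasGradientAt φ (G y) y)
    (hψ : ∀ y, HasGradientAt ψ (Gψ y) y) {K K' : ℝ} (hG : ∀ y y', ‖G y - G y'‖ ≤ K * ‖y - y'‖)
    (hGψ : ∀ y y', ‖Gψ y - Gψ y'‖ ≤ K' * ‖y - y'‖) (p q : E) :
    φ p - ψ p - ⟪G p - Gψ p, p - q⟫ ≤ φ q - ψ q + (K + K') / 2 * ‖p - q‖ ^ 2 := by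
  have hlip : ∀ y y', ‖(Gψ y - G y) - (Gψ y' - G y')‖ ≤ (K' + K) * ‖y - y'‖ := fun y y' => by
    rw [sub_sub_sub_comm, add_mul]
    exact (norm_sub_le _ _).trans (add_le_add (hGψ y y') (hG y y'))
  have := le_add_inner_add_sq_of_lipschitz (fun y => (hψ y).sub (hφ y)) hlip p q
  rw [← inner_neg_neg, neg_sub, neg_sub, norm_sub_rev] at this
  linarith

theorem ConvexOn.inner_sub_nonneg_of_hasGradientAt (hconv : ConvexOn ℝ univ φ)
    (hφ : ∀ y, HasGradientAt φ (G y) y) (y y' : E) : 0 ≤ ⟪y - y', G y - G y'⟫ := by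
  have hline : ConvexOn ℝ univ (fun t : ℝ => φ (y' + t • (y - y'))) := by
    have hfun : (fun t : ℝ => φ (y' + t • (y - y'))) = φ ∘ AffineMap.lineMap y' y := by
      ext t
      simp [AffineMap.lineMap_apply_module', add_comm]
    rw [hfun]
    exact hconv.comp_affineMap _
  have hd : ∀ t : ℝ, HasDerivAt (fun t : ℝ => φ (y' + t • (y - y')))
      ⟪G (y' + t • (y - y')), y - y'⟫ t := fun t => (hφ _).hasDerivAt_comp_add_smul
  have hmono := hline.monotoneOn_deriv (fun t _ => (hd t).differentiableAt)
    (mem_univ 0) (mem_univ 1) zero_le_one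
  rw [(hd 0).deriv, (hd 1).deriv] at hmono
  simp only [zero_smul, add_zero, one_smul, add_sub_cancel] at hmono
  rw [inner_sub_right, real_inner_comm (G y), real_inner_comm (G y')]
  linarith

end Gradient

section AveragedObjective

variable {E : Type*} [NormedAddCommGroup E] [InnerProductSpace ℝ E] {m : ℕ}

noncomputable def averagedObjective (F : Fin m → E → ℝ) (h : E → ℝ) (y : E) : ℝ :=
  (1 / (m : ℝ)) * ∑ i, F i y - h y

variable [CompleteSpace E] {F : Fin m → E → ℝ} {GF : Fin m → E → E} {h : E → ℝ} {Gh : E → E}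

theorem hasGradientAt_averagedObjective (hF : ∀ i y, HasGradientAt (F i) (GF i y) y)
    (hh : ∀ y, HasGradientAt h (Gh y) y) (y : E) :
    HasGradientAt (averagedObjective F h) ((1 / (m : ℝ)) • ∑ i, GF i y - Gh y) y := by
  have hsum : HasGradientAt (fun y => ∑ i, F i y) (∑ i, GF i y) y := by
    rw [hasGradientAt_iff_hasFDerivAt, map_sum]
    exact HasFDerivAt.fun_sum fun i _ => (hF i y).hasFDerivAt
  have hscaled : HasGradientAt (fun y => (1 / (m : ℝ)) * ∑ i, F i y)
      ((1 / (m : ℝ)) • ∑ i, GF i y) y := by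
    rw [hasGradientAt_iff_hasFDerivAt, map_smul]
    exact hsum.hasFDerivAt.const_mul _
  exact hscaled.sub (hh y)

theorem averagedObjective_add_sq_le_of_forall_le (hm : 0 < m) {μ : ℝ}
    (hF : ∀ i y, HasGradientAt (F i) (GF i y) y)
    (hconc : ∀ i y y', ⟪y - y', GF i y - GF i y'⟫ ≤ -μ * ‖y - y'‖ ^ 2)
    (hconv : ConvexOn ℝ univ h) (hh : ∀ y, HasGradientAt h (Gh y) y) {ŷ : E}
    (hmax : ∀ y, averagedObjective F h y ≤ averagedObjective F h ŷ) (y : E) :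
    averagedObjective F h y + μ / 2 * ‖y - ŷ‖ ^ 2 ≤ averagedObjective F h ŷ := by
  set G : E → E := fun y => (1 / (m : ℝ)) • ∑ i, GF i y - Gh y
  have hgrad : ∀ y, HasGradientAt (averagedObjective F h) (G y) y :=
    hasGradientAt_averagedObjective hF hh
  have hGŷ : G ŷ = 0 := (map_eq_zero_iff _ (InnerProductSpace.toDual ℝ E).injective).1 <|
    IsLocalMax.hasFDerivAt_eq_zero (Filter.Eventually.of_forall hmax) (hgrad ŷ)
  have hmono : ∀ y y', ⟪y - y', G y - G y'⟫ ≤ -μ * ‖y - y'‖ ^ 2 := fun y y' => by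
    have hsum : ∑ i, ⟪y - y', GF i y - GF i y'⟫ ≤ m * (-μ * ‖y - y'‖ ^ 2) := by
      simpa using Finset.sum_le_sum fun i (_ : i ∈ Finset.univ) => hconc i y y'
    have hh_mono := hconv.inner_sub_nonneg_of_hasGradientAt hh y y'
    have hm' : (0 : ℝ) < m := Nat.cast_pos.2 hm
    calc ⟪y - y', G y - G y'⟫
        = (1 / (m : ℝ)) * ∑ i, ⟪y - y', GF i y - GF i y'⟫ - ⟪y - y', Gh y - Gh y'⟫ := by
          simp only [G, inner_sub_right, real_inner_smul_right, inner_sum, Finset.sum_sub_distrib]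
          ring
      _ ≤ (1 / (m : ℝ)) * (m * (-μ * ‖y - y'‖ ^ 2)) - 0 := by gcongr
      _ = -μ * ‖y - y'‖ ^ 2 := by field_simp; ring
  have := le_add_inner_add_sq_of_inner_sub_le hgrad hmono ŷ y
  rw [hGŷ, inner_zero_left] at this
  linarith

end AveragedObjective

theorem sum_inner_sum_smul_eq_of_sum_eq_zero {ι E : Type*} [Fintype ι] [NormedAddCommGroup E]
    [InnerProductSpace ℝ E] {A : ι → ι → ℝ} (hA : ∀ i, ∑ j, A i j = 0) (Λ Y : ι → E) (y : E) :
    ∑ i, ⟪Λ i, ∑ j, A i j • Y j⟫ = ∑ j, ⟪∑ i, A i j • Λ i, Y j - y⟫ := by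
  have hcentre : ∀ i, ∑ j, A i j • Y j = ∑ j, A i j • (Y j - y) := fun i => by
    simp only [smul_sub, Finset.sum_sub_distrib, ← Finset.sum_smul, hA, zero_smul, sub_zero]
  simp only [hcentre, inner_sum, sum_inner, real_inner_smul_left, real_inner_smul_right]
  exact Finset.sum_comm

section Reformulation

variable {m n₁ n₂ : ℕ} {L : ℝ}
  {f : Fin m → EuclideanSpace ℝ (Fin n₁) → EuclideanSpace ℝ (Fin n₂) → ℝ}
  {h : EuclideanSpace ℝ (Fin n₂) → ℝ} {w : Fin m → Fin m → ℝ}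

theorem sum_sub_ite_eq_zero (hrow : ∀ i, ∑ j, w i j = 1) (i : Fin m) :
    ∑ j, (w i j - if i = j then 1 else 0) = 0 := by
  simp [Finset.sum_sub_distrib, hrow]

theorem Phi_const_eq_averagedObjective (hm : 0 < m) (hrow : ∀ i, ∑ j, w i j = 1)
    (x : EuclideanSpace ℝ (Fin n₁))
    (Λ : Fin m → EuclideanSpace ℝ (Fin n₂)) (y : EuclideanSpace ℝ (Fin n₂)) :
    Phi L f h w (fun _ => x) Λ (fun _ => y) = averagedObjective (fun i => f i x) h y := by
  have hm' : (m : ℝ) ≠ 0 := Nat.cast_ne_zero.2 hm.ne'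
  simp only [Phi, averagedObjective, ← Finset.sum_smul, sum_sub_ite_eq_zero hrow, zero_smul,
    inner_zero_right, Finset.sum_const_zero, mul_zero, sub_zero, Finset.sum_sub_distrib,
    Finset.sum_const, Finset.card_univ, Fintype.card_fin, nsmul_eq_mul]
  field_simp

theorem Phi_eq_of_stationary (hrow : ∀ i, ∑ j, w i j = 1) (D : Fin m → EuclideanSpace ℝ (Fin n₂))
    {Λ : Fin m → EuclideanSpace ℝ (Fin n₂)}
    (hD : ∀ i, (1 / (m : ℝ)) • D i
      = (L / (2 * Real.sqrt (m : ℝ))) • ∑ j, (w j i - if i = j then 1 else 0) • Λ j)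
    (X : Fin m → EuclideanSpace ℝ (Fin n₁)) (Y : Fin m → EuclideanSpace ℝ (Fin n₂))
    (y : EuclideanSpace ℝ (Fin n₂)) :
    Phi L f h w X Λ Y = (1 / (m : ℝ)) * ∑ i, (f i (X i) (Y i) - h (Y i) - ⟪D i, Y i - y⟫) := by
  have hcoupling : L / (2 * Real.sqrt (m : ℝ)) *
      ∑ i, ⟪Λ i, ∑ j, (w i j - if i = j then 1 else 0) • Y j⟫
        = (1 / (m : ℝ)) * ∑ j, ⟪D j, Y j - y⟫ := by
    rw [sum_inner_sum_smul_eq_of_sum_eq_zero (sum_sub_ite_eq_zero hrow) Λ Y y, Finset.mul_sum,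
      Finset.mul_sum]
    refine Finset.sum_congr rfl fun j _ => ?_
    rw [← real_inner_smul_left, ← real_inner_smul_left, hD j]
    simp only [@eq_comm _ j]
  rw [Phi, hcoupling, ← mul_sub, ← Finset.sum_sub_distrib]

theorem Phi_le_averagedObjective_add (hm : 0 < m) (hrow : ∀ i, ∑ j, w i j = 1)
    (D : Fin m → EuclideanSpace ℝ (Fin n₂)) {Λ : Fin m → EuclideanSpace ℝ (Fin n₂)}
    (hD : ∀ i, (1 / (m : ℝ)) • D i
      = (L / (2 * Real.sqrt (m : ℝ))) • ∑ j, (w j i - if i = j then 1 else 0) • Λ j)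
    {x : EuclideanSpace ℝ (Fin n₁)} {Y : Fin m → EuclideanSpace ℝ (Fin n₂)}
    {y : EuclideanSpace ℝ (Fin n₂)} {K : ℝ}
    (hagent : ∀ i, f i x (Y i) - h (Y i) - ⟪D i, Y i - y⟫ ≤ f i x y - h y + K / 2 * ‖Y i - y‖ ^ 2) :
    Phi L f h w (fun _ => x) Λ Y
      ≤ averagedObjective (fun i => f i x) h y + K / (2 * m) * ∑ i, ‖Y i - y‖ ^ 2 := by
  have hm' : (m : ℝ) ≠ 0 := Nat.cast_ne_zero.2 hm.ne'
  rw [Phi_eq_of_stationary hrow D hD _ Y y]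
  calc _ ≤ (1 / (m : ℝ)) * ∑ i, (f i x y - h y + K / 2 * ‖Y i - y‖ ^ 2) := by
        gcongr with i
        exact hagent i
    _ = _ := by
        simp only [averagedObjective, Finset.sum_add_distrib, Finset.sum_sub_distrib,
          ← Finset.mul_sum, Finset.sum_const, Finset.card_univ, Fintype.card_fin, nsmul_eq_mul]
        field_simp

end Reformulation

theorem dgdmax_dual_consensus_to_original_gap_smooth_general
    {m n₁ n₂ : ℕ} (hm : 0 < m)
    (L μ Lh : ℝ) (hμ : 0 < μ) (hLμ : μ ≤ L)
    (f : Fin m → EuclideanSpace ℝ (Fin n₁) → EuclideanSpace ℝ (Fin n₂) → ℝ)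
    (Gx : Fin m → EuclideanSpace ℝ (Fin n₁) → EuclideanSpace ℝ (Fin n₂) →
      EuclideanSpace ℝ (Fin n₁))
    (Gy : Fin m → EuclideanSpace ℝ (Fin n₁) → EuclideanSpace ℝ (Fin n₂) →
      EuclideanSpace ℝ (Fin n₂))
    (hGy : ∀ i x y, HasGradientAt (fun y' => f i x y') (Gy i x y) y)
    (hLip : ∀ i x y x' y',
      ‖Gx i x y - Gx i x' y'‖ ^ 2 + ‖Gy i x y - Gy i x' y'‖ ^ 2
        ≤ L ^ 2 * (‖x - x'‖ ^ 2 + ‖y - y'‖ ^ 2))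
    (hconc : ∀ i x y y', ⟪y - y', Gy i x y - Gy i x y'⟫ ≤ -μ * ‖y - y'‖ ^ 2)
    (h : EuclideanSpace ℝ (Fin n₂) → ℝ) (hconv : ConvexOn ℝ Set.univ h)
    (Gh : EuclideanSpace ℝ (Fin n₂) → EuclideanSpace ℝ (Fin n₂))
    (hGh : ∀ y, HasGradientAt h (Gh y) y)
    (hGhLip : ∀ y y', ‖Gh y - Gh y'‖ ≤ Lh * ‖y - y'‖)
    (w : Fin m → Fin m → ℝ) (hrow : ∀ i, ∑ j, w i j = 1)
    (xb : EuclideanSpace ℝ (Fin n₁))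
    (Lamb Yb : Fin m → EuclideanSpace ℝ (Fin n₂))
    (hmax : ∀ Y : Fin m → EuclideanSpace ℝ (Fin n₂),
      Phi L f h w (fun _ => xb) Lamb Y ≤ Phi L f h w (fun _ => xb) Lamb Yb)
    (hstat : ∀ i, (1 / (m : ℝ)) • (Gy i xb (Yb i) - Gh (Yb i))
        = (L / (2 * Real.sqrt (m : ℝ))) •
            ∑ j, (w j i - if i = j then 1 else 0) • Lamb j)
    (yh : EuclideanSpace ℝ (Fin n₂))
    (hyh : ∀ y : EuclideanSpace ℝ (Fin n₂),
      (1 / (m : ℝ)) * ∑ i, f i xb y - h y ≤ (1 / (m : ℝ)) * ∑ i, f i xb yh - h yh) :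
    μ * ‖yh - (1 / (m : ℝ)) • ∑ i, Yb i‖ ^ 2
      ≤ ((L + Lh) / (m : ℝ)) * ∑ i, ‖Yb i - (1 / (m : ℝ)) • ∑ k, Yb k‖ ^ 2 := by
  set yb := (1 / (m : ℝ)) • ∑ i, Yb i
  have hGyLip : ∀ i y y', ‖Gy i xb y - Gy i xb y'‖ ≤ L * ‖y - y'‖ := fun i y y' => by
    have hL : 0 ≤ L := hμ.le.trans hLμ
    have hsq := hLip i xb y xb y'
    rw [sub_self, norm_zero] at hsq
    refine (pow_le_pow_iff_left₀ (norm_nonneg _) (by positivity) two_ne_zero).1 ?_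
    nlinarith [sq_nonneg ‖Gx i xb y - Gx i xb y'‖]
  have hagent := fun i =>
    sub_sub_inner_le_add_sq_of_lipschitz (hGy i xb) hGh (hGyLip i) hGhLip (Yb i) yb
  have hupper : averagedObjective (fun i => f i xb) h yh
      ≤ averagedObjective (fun i => f i xb) h yb + (L + Lh) / (2 * m) * ∑ i, ‖Yb i - yb‖ ^ 2 :=
    calc _ = Phi L f h w (fun _ => xb) Lamb (fun _ => yh) :=
          (Phi_const_eq_averagedObjective hm hrow xb Lamb yh).symm
      _ ≤ Phi L f h w (fun _ => xb) Lamb Yb := hmax _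
      _ ≤ _ := Phi_le_averagedObjective_add hm hrow _ hstat hagent
  have hstrong := averagedObjective_add_sq_le_of_forall_le hm (fun i => hGy i xb)
    (fun i => hconc i xb) hconv hGh hyh yb
  rw [norm_sub_rev] at hstrong
  have hm' : (0 : ℝ) < m := Nat.cast_pos.2 hm
  calc μ * ‖yh - yb‖ ^ 2 ≤ 2 * ((L + Lh) / (2 * m) * ∑ i, ‖Yb i - yb‖ ^ 2) := by linarith
    _ = (L + Lh) / m * ∑ i, ‖Yb i - yb‖ ^ 2 := by field_simp

/-- Smooth-regularizer case of the lemma relating near-stationarity of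
the reformulation to near-stationarity of the original problem: if `h` is convex with
`L_h`-Lipschitz gradient, then `μ‖ŷ − ȳ_avg‖² ≤ ((L + L_h)/m) Σ_i ‖ȳ_i − ȳ_avg‖²`. -/
theorem dgdmax_dual_consensus_to_original_gap_smooth
    {m n₁ n₂ : ℕ} (hm : 0 < m) (hn₁ : 0 < n₁) (hn₂ : 0 < n₂)
    (L μ Lh : ℝ) (hμ : 0 < μ) (hLμ : μ ≤ L) (hLh : 0 ≤ Lh)
    (f : Fin m → EuclideanSpace ℝ (Fin n₁) → EuclideanSpace ℝ (Fin n₂) → ℝ)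
    (Gx : Fin m → EuclideanSpace ℝ (Fin n₁) → EuclideanSpace ℝ (Fin n₂) →
      EuclideanSpace ℝ (Fin n₁))
    (Gy : Fin m → EuclideanSpace ℝ (Fin n₁) → EuclideanSpace ℝ (Fin n₂) →
      EuclideanSpace ℝ (Fin n₂))
    (hGx : ∀ i x y, HasGradientAt (fun x' => f i x' y) (Gx i x y) x)
    (hGy : ∀ i x y, HasGradientAt (fun y' => f i x y') (Gy i x y) y)
    (hLip : ∀ i x y x' y',
      ‖Gx i x y - Gx i x' y'‖ ^ 2 + ‖Gy i x y - Gy i x' y'‖ ^ 2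
        ≤ L ^ 2 * (‖x - x'‖ ^ 2 + ‖y - y'‖ ^ 2))
    (hconc : ∀ i x y y', ⟪y - y', Gy i x y - Gy i x y'⟫ ≤ -μ * ‖y - y'‖ ^ 2)
    (h : EuclideanSpace ℝ (Fin n₂) → ℝ) (hconv : ConvexOn ℝ Set.univ h)
    (Gh : EuclideanSpace ℝ (Fin n₂) → EuclideanSpace ℝ (Fin n₂))
    (hGh : ∀ y, HasGradientAt h (Gh y) y)
    (hGhLip : ∀ y y', ‖Gh y - Gh y'‖ ≤ Lh * ‖y - y'‖)
    (w : Fin m → Fin m → ℝ) (hrow : ∀ i, ∑ j, w i j = 1)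
    (xb : EuclideanSpace ℝ (Fin n₁))
    (Lamb Yb : Fin m → EuclideanSpace ℝ (Fin n₂))
    (hmax : ∀ Y : Fin m → EuclideanSpace ℝ (Fin n₂),
      Phi L f h w (fun _ => xb) Lamb Y ≤ Phi L f h w (fun _ => xb) Lamb Yb)
    (hstat : ∀ i, (1 / (m : ℝ)) • (Gy i xb (Yb i) - Gh (Yb i))
        = (L / (2 * Real.sqrt (m : ℝ))) •
            ∑ j, (w j i - if i = j then 1 else 0) • Lamb j)
    (yh : EuclideanSpace ℝ (Fin n₂))
    (hyh : ∀ y : EuclideanSpace ℝ (Fin n₂),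
      (1 / (m : ℝ)) * ∑ i, f i xb y - h y ≤ (1 / (m : ℝ)) * ∑ i, f i xb yh - h yh) :
    μ * ‖yh - (1 / (m : ℝ)) • ∑ i, Yb i‖ ^ 2
      ≤ ((L + Lh) / (m : ℝ)) * ∑ i, ‖Yb i - (1 / (m : ℝ)) • ∑ k, Yb k‖ ^ 2 :=
  dgdmax_dual_consensus_to_original_gap_smooth_general hm L μ Lh hμ hLμ f Gx Gy hGy hLip hconc h
    hconv Gh hGh hGhLip w hrow xb Lamb Yb hmax hstat yh hyh
end
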